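/- Let v, v′, w, w′ be words over Ū_H ∪ {t, t⁻¹} in HNN reduced form such that v ←_m w, w ∼ w′ and w′ →_{m′} v′. Then there is a word w″ over Ū_H ∪ {t, t⁻¹} such that w ∼ w″ and elementary cancellations are possible at both positions m and m′ in w″. -/

import Mathlib

/-- `S` is a free basis of the group `G`: the induced map from the free group
on `S` is an isomorphism. -/
def IsFreeBasis {G : Type*} [Group G] (S : Set G) : Prop :=
  Function.Bijective ⇑(FreeGroup.lift (Subtype.val : S → G))

/-- Letters of words over `Ū_H ∪ {t, t⁻¹}`: an element of the free group `H`
(intended to lie in `Ū_H`), the stable letter `t`, or its inverse. -/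
inductive HLetter (X : Type*) where
  | gen : FreeGroup X → HLetter X
  | t : HLetter X
  | tinv : HLetter X

namespace HnnPaper

variable {X : Type*}

/-- A word `w` is a word over `S ∪ {t, t⁻¹}` if all its group letters lie in `S`. -/
def WordOver (S : Set (FreeGroup X)) (w : List (HLetter X)) : Prop :=
  ∀ l ∈ w, ∀ u : FreeGroup X, l = HLetter.gen u → u ∈ S

/-- A word consisting only of group letters (no `t`, `t⁻¹`). -/
def IsGenOnly (w : List (HLetter X)) : Prop :=
  ∀ l ∈ w, ∃ u : FreeGroup X, l = HLetter.gen u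

/-- The element of `H` represented by a `t`-free word (treats `t`-letters as `1`). -/
def evalH (w : List (HLetter X)) : FreeGroup X :=
  (w.map fun l => match l with
    | HLetter.gen u => u
    | _ => 1).prod

/-- `w` is in HNN reduced form: it has no subword `t⁻¹ w_i t` with `w_i` a `t`-free
word representing an element of `A = ⟨U_A⟩`, and no subword `t w_i t⁻¹` with `w_i`
a `t`-free word representing an element of `B = ⟨U_B⟩`. -/
def HNNReducedWord (UA UB : Set (FreeGroup X)) (w : List (HLetter X)) : Prop :=
  (∀ p mid s, w = p ++ [HLetter.tinv] ++ mid ++ [HLetter.t] ++ s →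
      IsGenOnly mid → evalH mid ∉ Subgroup.closure UA) ∧
  (∀ p mid s, w = p ++ [HLetter.t] ++ mid ++ [HLetter.tinv] ++ s →
      IsGenOnly mid → evalH mid ∉ Subgroup.closure UB)

variable {UA UB : Set (FreeGroup X)}

/-- The element of the HNN extension `H* = H ∗_{t,φ:A→B}` represented by a word. -/
def evalStar (φ : ↥(Subgroup.closure UA) ≃* ↥(Subgroup.closure UB))
    (w : List (HLetter X)) :
    HNNExtension (FreeGroup X) (Subgroup.closure UA) (Subgroup.closure UB) φ :=
  (w.map fun l => match l with
    | HLetter.gen u => HNNExtension.of u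
    | HLetter.t => HNNExtension.t
    | HLetter.tinv => HNNExtension.t⁻¹).prod

/-- Elementary addition: insertion of a pair `u u⁻¹` with `u ∈ Ū_H`. -/
def ElemAdd (UH : Set (FreeGroup X)) (w w' : List (HLetter X)) : Prop :=
  ∃ (p s : List (HLetter X)) (u : FreeGroup X), u ∈ UH ∪ UH⁻¹ ∧ w = p ++ s ∧
    w' = p ++ [HLetter.gen u, HLetter.gen u⁻¹] ++ s

/-- Elementary cancellation: deletion of a pair `u u⁻¹` with `u ∈ Ū_H`. -/
def ElemDel (UH : Set (FreeGroup X)) (w w' : List (HLetter X)) : Prop :=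
  ElemAdd UH w' w

/-- Elementary semicommutation: replacement of `u_a t` by `t u_b`, or of `t⁻¹ u_a`
by `u_b t⁻¹` (or conversely in either case), where `u_a ∈ Ū_A`, `u_b ∈ Ū_B` and
`φ(u_a) = u_b`. -/
def ElemSemi (φ : ↥(Subgroup.closure UA) ≃* ↥(Subgroup.closure UB))
    (w w' : List (HLetter X)) : Prop :=
  ∃ (p s : List (HLetter X)) (a : ↥(Subgroup.closure UA)), (a : FreeGroup X) ∈ UA ∪ UA⁻¹ ∧
    ((w = p ++ [HLetter.gen ↑a, HLetter.t] ++ s ∧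
      w' = p ++ [HLetter.t, HLetter.gen ↑(φ a)] ++ s) ∨
     (w = p ++ [HLetter.t, HLetter.gen ↑(φ a)] ++ s ∧
      w' = p ++ [HLetter.gen ↑a, HLetter.t] ++ s) ∨
     (w = p ++ [HLetter.tinv, HLetter.gen ↑a] ++ s ∧
      w' = p ++ [HLetter.gen ↑(φ a), HLetter.tinv] ++ s) ∨
     (w = p ++ [HLetter.gen ↑(φ a), HLetter.tinv] ++ s ∧
      w' = p ++ [HLetter.tinv, HLetter.gen ↑a] ++ s))

/-- An elementary operation: an elementary addition, cancellation or semicommutation. -/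
def ElemOp (UH : Set (FreeGroup X)) (φ : ↥(Subgroup.closure UA) ≃* ↥(Subgroup.closure UB))
    (w w' : List (HLetter X)) : Prop :=
  ElemAdd UH w w' ∨ ElemDel UH w w' ∨ ElemSemi φ w w'

/-- `w ∼ w'`: a finite sequence of elementary semicommutations turns `w` into `w'`. -/
def Sim (φ : ↥(Subgroup.closure UA) ≃* ↥(Subgroup.closure UB)) :
    List (HLetter X) → List (HLetter X) → Prop :=
  Relation.ReflTransGen (ElemSemi φ)

/-- The word `t^n` (a run of `t`'s or of `t⁻¹`'s). -/
def tPow (n : ℤ) : List (HLetter X) :=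
  if 0 ≤ n then List.replicate n.toNat HLetter.t
  else List.replicate (-n).toNat HLetter.tinv

/-- The word `t^{n₀} u₁ t^{n₁} ⋯ u_k t^{n_k}` determined by `n₀` and the list
`[(u₁,n₁),…,(u_k,n_k)]`. -/
def blockWord (n0 : ℤ) (l : List (FreeGroup X × ℤ)) : List (HLetter X) :=
  tPow n0 ++ l.flatMap (fun p => HLetter.gen p.1 :: tPow p.2)

/-- `w →_m v`: `w ≡ t^{n₀} u₁ t^{n₁} ⋯ u_k t^{n_k}` with `u_{m+1} ≡ u_m⁻¹` and
`n_m = 0`, and `v` is obtained from `w` by the elementary cancellation of the pair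
`u_m u_{m+1}` (so `t^{n_{m-1}}` becomes `t^{n_{m-1}+n_{m+1}}`). -/
def CancelAt (m : ℕ) (w v : List (HLetter X)) : Prop :=
  ∃ (n0 : ℤ) (pre post : List (FreeGroup X × ℤ)) (u : FreeGroup X) (n' : ℤ),
    pre.length + 1 = m ∧
    w = blockWord n0 (pre ++ [(u, 0), (u⁻¹, n')] ++ post) ∧
    ((pre = [] ∧ v = blockWord (n0 + n') post) ∨
     (∃ pre' u' nl, pre = pre' ++ [(u', nl)] ∧
        v = blockWord n0 (pre' ++ [(u', nl + n')] ++ post)))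

/-- `w ⇝_m v`: there are HNN reduced words `w′, v′` with `w ∼ w′ →_m v′ ∼ v`. -/
def RsaAt (φ : ↥(Subgroup.closure UA) ≃* ↥(Subgroup.closure UB)) (m : ℕ)
    (w v : List (HLetter X)) : Prop :=
  ∃ w' v', HNNReducedWord UA UB w' ∧ HNNReducedWord UA UB v' ∧
    Sim φ w w' ∧ CancelAt m w' v' ∧ Sim φ v' v

/-- `w ⇝ v`: `w ⇝_m v` for some `m`. -/
def Rsa (φ : ↥(Subgroup.closure UA) ≃* ↥(Subgroup.closure UB))
    (w v : List (HLetter X)) : Prop :=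
  ∃ m, RsaAt φ m w v

/-- `w ≿ v`: either `w ∼ v` or there is a sequence `w ≡ w₀ ⇝ w₁ ⇝ ⋯ ⇝ w_k ≡ v`
with `k ≥ 1`. -/
def Succsim (φ : ↥(Subgroup.closure UA) ≃* ↥(Subgroup.closure UB))
    (w v : List (HLetter X)) : Prop :=
  Sim φ w v ∨ Relation.TransGen (Rsa φ) w v

/-- `v` is in most reduced form: it is HNN reduced and no `v ⇝ v'` is possible. -/
def MostReduced (φ : ↥(Subgroup.closure UA) ≃* ↥(Subgroup.closure UB))
    (v : List (HLetter X)) : Prop :=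
  HNNReducedWord UA UB v ∧ ∀ v', ¬ Rsa φ v v'

/-- `MRF(w)`: the set of words `v` with `v ≾ w` that are in most reduced form. -/
def MRF (φ : ↥(Subgroup.closure UA) ≃* ↥(Subgroup.closure UB))
    (w : List (HLetter X)) : Set (List (HLetter X)) :=
  {v | Succsim φ w v ∧ MostReduced φ v}

/-- The partial bijection `Ū_A → Ū_B` induced by `φ`, as a relation on `H`. -/
def PhiRel (φ : ↥(Subgroup.closure UA) ≃* ↥(Subgroup.closure UB))
    (u v : FreeGroup X) : Prop :=
  ∃ a : ↥(Subgroup.closure UA), (a : FreeGroup X) ∈ UA ∪ UA⁻¹ ∧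
    (a : FreeGroup X) = u ∧ ((φ a : ↥(Subgroup.closure UB)) : FreeGroup X) = v

/-- `v = φ^n(u)` for `n ∈ ℕ`. -/
def PhiPowN (φ : ↥(Subgroup.closure UA) ≃* ↥(Subgroup.closure UB)) :
    ℕ → FreeGroup X → FreeGroup X → Prop
  | 0 => Eq
  | (n + 1) => fun u v => ∃ w, PhiPowN φ n u w ∧ PhiRel φ w v

/-- `v = φ^z(u)` for `z ∈ ℤ`. -/
def PhiZPow (φ : ↥(Subgroup.closure UA) ≃* ↥(Subgroup.closure UB)) (z : ℤ)
    (u v : FreeGroup X) : Prop :=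
  if 0 ≤ z then PhiPowN φ z.toNat u v else PhiPowN φ (-z).toNat v u

end HnnPaper

/-!
Follow every group letter of a word together with its `t`-height, the exponent sum of `t` in
the prefix before it. A semicommutation moves one letter from `(y, c)` to `(φ y, c + 1)` or back,
and this step relation is injective in both directions, so along `w ∼ w′` the letters at equal
positions of `w` and `w′` are joined by a monotone chain of such steps. Say `m < m′`, and let
`g t^n h` be the letters at positions `m, m + 1` of `w′`. They sit where `u u⁻¹` sits in `w`, so
the chain from `g` reaches `h⁻¹` in exactly `n` steps: semicommuting `g` through `t^n` yields
`t^n h⁻¹ h`, cancellable at position `m`, while positions `m′, m′ + 1` are untouched. HNN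
reducedness of `w′` makes `t^n` agree in sign with the run of `t`'s before `g`, so the result is
again a block word.
-/

namespace Relation

variable {α : Type*} {r : α → α → Prop} {a b : α}

theorem EqvGen.reflTransGen_or_reflTransGen (hr : Relator.RightUnique r)
    (hl : Relator.LeftUnique r) (h : EqvGen r a b) :
    ReflTransGen r a b ∨ ReflTransGen r b a := by
  have hl' : Relator.RightUnique (Function.swap r) := fun _ _ _ h₁ h₂ => hl h₁ h₂
  induction h with
  | rel _ _ h => exact .inl (.single h)
  | refl => exact .inl .refl
  | symm _ _ _ ih => exact ih.symm
  | trans x y z _ _ ihxy ihyz =>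
    rcases ihxy with hxy | hyx <;> rcases ihyz with hyz | hzy
    · exact .inl (hxy.trans hyz)
    · exact ((ReflTransGen.total_of_right_unique hl' (reflTransGen_swap.2 hxy)
        (reflTransGen_swap.2 hzy)).imp reflTransGen_swap.1 reflTransGen_swap.1).symm
    · exact ReflTransGen.total_of_right_unique hr hyx hyz
    · exact .inr (hzy.trans hyx)

end Relation

theorem List.Forall₂.trans {α : Type*} {R : α → α → Prop}
    (hR : ∀ a b c, R a b → R b c → R a c) :
    ∀ {l₁ l₂ l₃ : List α}, Forall₂ R l₁ l₂ → Forall₂ R l₂ l₃ → Forall₂ R l₁ l₃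
  | _, _, _, .nil, .nil => .nil
  | _, _, _, .cons h₁ t₁, .cons h₂ t₂ => .cons (hR _ _ _ h₁ h₂) (t₁.trans hR t₂)

namespace HnnPaper

open Relation List

variable {X : Type*} {UA UB : Set (FreeGroup X)}
  {φ : ↥(Subgroup.closure UA) ≃* ↥(Subgroup.closure UB)}

def PhiStep (φ : ↥(Subgroup.closure UA) ≃* ↥(Subgroup.closure UB))
    (p q : FreeGroup X × ℤ) : Prop :=
  PhiRel φ p.1 q.1 ∧ q.2 = p.2 + 1

theorem phiStep_rightUnique : Relator.RightUnique (PhiStep φ) := by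
  rintro p q q' ⟨⟨a, -, ha, hq⟩, hc⟩ ⟨⟨a', -, ha', hq'⟩, hc'⟩
  obtain rfl : a = a' := Subtype.ext (ha.trans ha'.symm)
  exact Prod.ext (hq.symm.trans hq') (hc.trans hc'.symm)

theorem phiStep_leftUnique : Relator.LeftUnique (PhiStep φ) := by
  rintro p p' q ⟨⟨a, -, ha, hq⟩, hc⟩ ⟨⟨a', -, ha', hq'⟩, hc'⟩
  obtain rfl : a = a' := φ.injective (Subtype.ext (hq.trans hq'.symm))
  exact Prod.ext (ha.symm.trans ha') (by omega)

theorem PhiStep.inv {p q : FreeGroup X × ℤ} (h : PhiStep φ p q) :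
    PhiStep φ (p.1⁻¹, p.2) (q.1⁻¹, q.2) := by
  obtain ⟨⟨a, ha, hp, hq⟩, hc⟩ := h
  refine ⟨⟨a⁻¹, ?_, by simp [hp], by simp [hq]⟩, hc⟩
  simpa [or_comm] using ha

theorem eqvGen_phiStep_inv {p q : FreeGroup X × ℤ} (h : EqvGen (PhiStep φ) p q) :
    EqvGen (PhiStep φ) (p.1⁻¹, p.2) (q.1⁻¹, q.2) := by
  induction h with
  | rel _ _ h => exact .rel _ _ h.inv
  | refl => exact .refl _
  | symm _ _ _ ih => exact ih.symm
  | trans _ _ _ _ _ ih₁ ih₂ => exact ih₁.trans _ _ _ ih₂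

theorem height_le_of_reflTransGen {p q : FreeGroup X × ℤ}
    (h : ReflTransGen (PhiStep φ) p q) : p.2 ≤ q.2 := by
  induction h with
  | refl => rfl
  | tail _ hs ih => have := hs.2; omega

theorem reflTransGen_of_eqvGen {p q : FreeGroup X × ℤ} (h : EqvGen (PhiStep φ) p q)
    (hpq : p.2 ≤ q.2) : ReflTransGen (PhiStep φ) p q := by
  rcases h.reflTransGen_or_reflTransGen phiStep_rightUnique phiStep_leftUnique with h | h
  · exact h
  · rcases h.cases_head with rfl | ⟨r, hqr, hrp⟩
    · exact .refl
    · have := height_le_of_reflTransGen hrp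
      have := hqr.2
      omega

theorem fst_mem_closure_of_reflTransGen {p q : FreeGroup X × ℤ}
    (h : ReflTransGen (PhiStep φ) p q) (hpq : p.2 < q.2) : p.1 ∈ Subgroup.closure UA := by
  rcases h.cases_head with rfl | ⟨r, ⟨⟨a, -, ha, -⟩, -⟩, -⟩
  · exact absurd hpq (lt_irrefl _)
  · exact ha ▸ a.2

theorem snd_mem_closure_of_reflTransGen {p q : FreeGroup X × ℤ}
    (h : ReflTransGen (PhiStep φ) p q) (hpq : p.2 < q.2) : q.1 ∈ Subgroup.closure UB := by
  rcases h.cases_tail with rfl | ⟨r, -, ⟨⟨a, -, -, ha⟩, -⟩⟩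
  · exact absurd hpq (lt_irrefl _)
  · exact ha ▸ (φ a).2

def tExponent : List (HLetter X) → ℤ
  | [] => 0
  | HLetter.gen _ :: w => tExponent w
  | HLetter.t :: w => tExponent w + 1
  | HLetter.tinv :: w => tExponent w - 1

def letterHeights : List (HLetter X) → ℤ → List (FreeGroup X × ℤ)
  | [], _ => []
  | HLetter.gen u :: w, c => (u, c) :: letterHeights w c
  | HLetter.t :: w, c => letterHeights w (c + 1)
  | HLetter.tinv :: w, c => letterHeights w (c - 1)

@[simp]
theorem tExponent_append (w₁ w₂ : List (HLetter X)) :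
    tExponent (w₁ ++ w₂) = tExponent w₁ + tExponent w₂ := by
  induction w₁ with
  | nil => simp [tExponent]
  | cons l w ih => cases l <;> simp only [cons_append, tExponent, ih] <;> ring

@[simp]
theorem letterHeights_append (w₁ w₂ : List (HLetter X)) (c : ℤ) :
    letterHeights (w₁ ++ w₂) c = letterHeights w₁ c ++ letterHeights w₂ (c + tExponent w₁) := by
  induction w₁ generalizing c with
  | nil => simp [letterHeights, tExponent]
  | cons l w ih =>
    cases l <;> simp only [cons_append, letterHeights, tExponent, ih, cons_append] <;>
      congr 2 <;> ring

theorem tPow_of_nonneg {n : ℤ} (hn : 0 ≤ n) :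
    (tPow n : List (HLetter X)) = replicate n.toNat HLetter.t := by
  simp [tPow, hn]

theorem tPow_of_nonpos {n : ℤ} (hn : n ≤ 0) :
    (tPow n : List (HLetter X)) = replicate (-n).toNat HLetter.tinv := by
  rcases hn.lt_or_eq with hn | rfl
  · simp [tPow, hn.not_ge]
  · rfl

@[simp]
theorem tPow_zero : (tPow 0 : List (HLetter X)) = [] := rfl

theorem tPow_one : (tPow 1 : List (HLetter X)) = [HLetter.t] := rfl

theorem tPow_neg_one : (tPow (-1) : List (HLetter X)) = [HLetter.tinv] := rfl

@[simp]
theorem tExponent_tPow (n : ℤ) : tExponent (tPow n : List (HLetter X)) = n := by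
  have ht (k : ℕ) : tExponent (replicate k (HLetter.t (X := X))) = k := by
    induction k <;> simp_all [replicate_succ, tExponent]
  have htinv (k : ℕ) : tExponent (replicate k (HLetter.tinv (X := X))) = -k := by
    induction k <;> simp_all [replicate_succ, tExponent]; ring
  rcases le_total 0 n with hn | hn
  · rw [tPow_of_nonneg hn, ht]; omega
  · rw [tPow_of_nonpos hn, htinv]; omega

@[simp]
theorem letterHeights_tPow (n c : ℤ) : letterHeights (tPow n : List (HLetter X)) c = [] := by
  unfold tPow
  split
  · induction n.toNat generalizing c <;> simp_all [replicate_succ, letterHeights]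
  · induction (-n).toNat generalizing c <;> simp_all [replicate_succ, letterHeights]

theorem gen_notMem_tPow (u : FreeGroup X) (n : ℤ) :
    HLetter.gen u ∉ (tPow n : List (HLetter X)) := by
  unfold tPow
  split <;> simp [mem_replicate]

theorem blockWord_cons (n0 : ℤ) (p : FreeGroup X × ℤ) (L : List (FreeGroup X × ℤ)) :
    blockWord n0 (p :: L) = tPow n0 ++ HLetter.gen p.1 :: blockWord p.2 L := by
  simp [blockWord]

theorem blockWord_eq_tPow_append (n0 : ℤ) (L : List (FreeGroup X × ℤ)) :
    blockWord n0 L = tPow n0 ++ blockWord 0 L := by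
  simp [blockWord]

theorem blockWord_append (n0 : ℤ) (A B : List (FreeGroup X × ℤ)) :
    blockWord n0 (A ++ B) = blockWord n0 A ++ blockWord 0 B := by
  simp [blockWord]

theorem letterHeights_blockWord_cons (n0 : ℤ) (p : FreeGroup X × ℤ)
    (L : List (FreeGroup X × ℤ)) (c : ℤ) :
    letterHeights (blockWord n0 (p :: L)) c =
      (p.1, c + n0) :: letterHeights (blockWord p.2 L) (c + n0) := by
  simp [blockWord_cons, letterHeights]

theorem length_letterHeights_blockWord (n0 : ℤ) (L : List (FreeGroup X × ℤ)) (c : ℤ) :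
    (letterHeights (blockWord n0 L) c).length = L.length := by
  induction L generalizing n0 c with
  | nil => simp [blockWord]
  | cons p L ih => simp [letterHeights_blockWord_cons, ih]

theorem exists_letterHeights_blockWord (n0 : ℤ) (A : List (FreeGroup X × ℤ))
    (p q : FreeGroup X × ℤ) (B : List (FreeGroup X × ℤ)) :
    ∃ H c T, H.length = A.length ∧
      letterHeights (blockWord n0 (A ++ p :: q :: B)) 0 = H ++ (p.1, c) :: (q.1, c + p.2) :: T :=
  ⟨_, tExponent (blockWord n0 A),
    letterHeights (blockWord q.2 B) (tExponent (blockWord n0 A) + p.2),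
    length_letterHeights_blockWord n0 A 0, by
    simp [blockWord_append, letterHeights_blockWord_cons]⟩

theorem wordOver_blockWord {S : Set (FreeGroup X)} {n0 : ℤ} {L : List (FreeGroup X × ℤ)} :
    WordOver S (blockWord n0 L) ↔ ∀ x ∈ L.map Prod.fst, x ∈ S := by
  constructor
  · rintro h _ hx
    obtain ⟨⟨x, n⟩, hmem, rfl⟩ := mem_map.1 hx
    exact h _ (by simpa [blockWord] using Or.inr ⟨x, n, hmem, Or.inl rfl⟩) x rfl
  · rintro h l hl u rfl
    simp only [blockWord, mem_append, mem_flatMap, mem_cons] at hl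
    rcases hl with hl | ⟨p, hp, hl | hl⟩
    · exact absurd hl (gen_notMem_tPow u n0)
    · cases hl
      exact h _ (mem_map_of_mem hp)
    · exact absurd hl (gen_notMem_tPow u p.2)

theorem forall₂_letterHeights_of_middle {p s m m' : List (HLetter X)}
    (hexp : tExponent m = tExponent m')
    (hmid : Forall₂ (EqvGen (PhiStep φ)) (letterHeights m (tExponent p))
      (letterHeights m' (tExponent p))) :
    Forall₂ (EqvGen (PhiStep φ)) (letterHeights (p ++ m ++ s) 0)
      (letterHeights (p ++ m' ++ s) 0) := by
  have hrefl (l : List (FreeGroup X × ℤ)) : Forall₂ (EqvGen (PhiStep φ)) l l :=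
    forall₂_same.2 fun x _ => .refl x
  simp only [letterHeights_append, tExponent_append, zero_add, hexp]
  exact rel_append (rel_append (hrefl _) hmid) (hrefl _)

theorem ElemSemi.forall₂_letterHeights {w w' : List (HLetter X)} (h : ElemSemi φ w w') :
    Forall₂ (EqvGen (PhiStep φ)) (letterHeights w 0) (letterHeights w' 0) := by
  obtain ⟨p, s, a, ha, hcase⟩ := h
  have hstep (c c' : ℤ) (hc : c' = c + 1) : PhiStep φ (↑a, c) (↑(φ a), c') :=
    ⟨⟨a, ha, rfl, rfl⟩, hc⟩
  rcases hcase with ⟨rfl, rfl⟩ | ⟨rfl, rfl⟩ | ⟨rfl, rfl⟩ | ⟨rfl, rfl⟩ <;>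
    refine forall₂_letterHeights_of_middle (by simp [tExponent]) ?_ <;>
    simp only [letterHeights, forall₂_cons, Forall₂.nil, and_true]
  · exact .rel _ _ (hstep _ _ rfl)
  · exact .symm _ _ (.rel _ _ (hstep _ _ rfl))
  · exact .rel _ _ (hstep _ _ (by ring))
  · exact .symm _ _ (.rel _ _ (hstep _ _ (by ring)))

theorem Sim.forall₂_letterHeights {w w' : List (HLetter X)} (h : Sim φ w w') :
    Forall₂ (EqvGen (PhiStep φ)) (letterHeights w 0) (letterHeights w' 0) := by
  induction h with
  | refl => exact forall₂_same.2 fun x _ => .refl x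
  | tail _ hs ih => exact ih.trans EqvGen.trans hs.forall₂_letterHeights

theorem ElemSemi.symm {w w' : List (HLetter X)} (h : ElemSemi φ w w') : ElemSemi φ w' w := by
  obtain ⟨p, s, a, ha, hcase⟩ := h
  exact ⟨p, s, a, ha, by tauto⟩

theorem Sim.symm {w w' : List (HLetter X)} (h : Sim φ w w') : Sim φ w' w := by
  induction h with
  | refl => exact .refl
  | tail _ hs ih => exact .head hs.symm ih

theorem sim_gen_replicate_t {p q : FreeGroup X × ℤ} (h : ReflTransGen (PhiStep φ) p q)
    (P S : List (HLetter X)) :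
    Sim φ (P ++ HLetter.gen p.1 :: (replicate (q.2 - p.2).toNat HLetter.t ++ S))
      (P ++ replicate (q.2 - p.2).toNat HLetter.t ++ HLetter.gen q.1 :: S) := by
  induction h using ReflTransGen.head_induction_on generalizing P with
  | refl =>
    simp only [sub_self, Int.toNat_zero, replicate_zero, nil_append, append_nil]
    exact .refl
  | @head p r hpr hrq ih =>
    have hle := height_le_of_reflTransGen hrq
    obtain ⟨⟨a, ha, hp, hr⟩, hc⟩ := hpr
    rw [show (q.2 - p.2).toNat = (q.2 - r.2).toNat + 1 by omega, replicate_succ]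
    refine .head ⟨P, replicate (q.2 - r.2).toNat HLetter.t ++ S, a, ha,
      .inl ⟨by simp [hp], rfl⟩⟩ ?_
    have h := ih (P ++ [HLetter.t])
    simp only [hr, append_assoc, cons_append, nil_append] at h ⊢
    exact h

theorem sim_gen_replicate_tinv {p q : FreeGroup X × ℤ} (h : ReflTransGen (PhiStep φ) q p)
    (P S : List (HLetter X)) :
    Sim φ (P ++ HLetter.gen p.1 :: (replicate (p.2 - q.2).toNat HLetter.tinv ++ S))
      (P ++ replicate (p.2 - q.2).toNat HLetter.tinv ++ HLetter.gen q.1 :: S) := by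
  induction h generalizing P with
  | refl =>
    simp only [sub_self, Int.toNat_zero, replicate_zero, nil_append, append_nil]
    exact .refl
  | @tail r p hqr hrp ih =>
    have hle := height_le_of_reflTransGen hqr
    obtain ⟨⟨a, ha, hr, hp⟩, hc⟩ := hrp
    rw [show (p.2 - q.2).toNat = (r.2 - q.2).toNat + 1 by omega, replicate_succ]
    refine .head ⟨P, replicate (r.2 - q.2).toNat HLetter.tinv ++ S, a, ha,
      .inr (.inr (.inr ⟨by simp [hp], rfl⟩))⟩ ?_
    have h := ih (P ++ [HLetter.tinv])
    simp only [hr, append_assoc, cons_append, nil_append] at h ⊢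
    exact h

theorem sim_gen_tPow {g h : FreeGroup X} {c n : ℤ} (hgh : EqvGen (PhiStep φ) (g, c) (h, c + n))
    (P S : List (HLetter X)) :
    Sim φ (P ++ HLetter.gen g :: (tPow n ++ S)) (P ++ tPow n ++ HLetter.gen h :: S) := by
  rcases le_total 0 n with hn | hn
  · simpa [tPow_of_nonneg hn] using
      sim_gen_replicate_t (reflTransGen_of_eqvGen hgh (by simpa using hn)) P S
  · simpa [tPow_of_nonpos hn] using
      sim_gen_replicate_tinv (reflTransGen_of_eqvGen hgh.symm (by simpa using hn)) P S

theorem mem_closure_of_eqvGen_of_pos {g h : FreeGroup X} {c n : ℤ}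
    (hgh : EqvGen (PhiStep φ) (g, c) (h, c + n)) (hn : 0 < n) : g ∈ Subgroup.closure UA :=
  fst_mem_closure_of_reflTransGen (reflTransGen_of_eqvGen hgh (show c ≤ c + n by omega))
    (show c < c + n by omega)

theorem mem_closure_of_eqvGen_of_neg {g h : FreeGroup X} {c n : ℤ}
    (hgh : EqvGen (PhiStep φ) (g, c) (h, c + n)) (hn : n < 0) : g ∈ Subgroup.closure UB :=
  snd_mem_closure_of_reflTransGen (reflTransGen_of_eqvGen hgh.symm (show c + n ≤ c by omega))
    (show c + n < c by omega)

theorem tPow_add {q n : ℤ} (h : 0 ≤ q ∧ 0 ≤ n ∨ q ≤ 0 ∧ n ≤ 0) :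
    (tPow (q + n) : List (HLetter X)) = tPow q ++ tPow n := by
  rcases h with ⟨hq, hn⟩ | ⟨hq, hn⟩
  · rw [tPow_of_nonneg hq, tPow_of_nonneg hn, tPow_of_nonneg (add_nonneg hq hn),
      ← replicate_add]
    congr 1; omega
  · rw [tPow_of_nonpos hq, tPow_of_nonpos hn, tPow_of_nonpos (add_nonpos hq hn),
      ← replicate_add]
    congr 1; omega

theorem HNNReducedWord.tPow_append_tPow {Q R : List (HLetter X)} {q n : ℤ} {g : FreeGroup X}
    (hred : HNNReducedWord UA UB (Q ++ tPow q ++ HLetter.gen g :: (tPow n ++ R)))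
    (hA : 0 < n → g ∈ Subgroup.closure UA) (hB : n < 0 → g ∈ Subgroup.closure UB) :
    (tPow q ++ tPow n : List (HLetter X)) = tPow (q + n) := by
  by_contra hne
  have hsign : 0 < q ∧ n < 0 ∨ q < 0 ∧ 0 < n := by
    by_contra h
    exact hne (tPow_add (by omega)).symm
  rcases hsign with ⟨hq, hn⟩ | ⟨hq, hn⟩
  · refine hred.2 (Q ++ tPow (q - 1)) [HLetter.gen g] (tPow (n + 1) ++ R) ?_
      (by simp [IsGenOnly]) (by simpa [evalH] using hB hn)
    have e₁ : (tPow q : List (HLetter X)) = tPow (q - 1) ++ tPow 1 := by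
      rw [← tPow_add (by omega)]; ring_nf
    have e₂ : (tPow n : List (HLetter X)) = tPow (-1) ++ tPow (n + 1) := by
      rw [← tPow_add (by omega)]; ring_nf
    simp [e₁, e₂, tPow_one, tPow_neg_one]
  · refine hred.1 (Q ++ tPow (q + 1)) [HLetter.gen g] (tPow (n - 1) ++ R) ?_
      (by simp [IsGenOnly]) (by simpa [evalH] using hA hn)
    have e₁ : (tPow q : List (HLetter X)) = tPow (q + 1) ++ tPow (-1) := by
      rw [← tPow_add (by omega)]; ring_nf
    have e₂ : (tPow n : List (HLetter X)) = tPow 1 ++ tPow (n - 1) := by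
      rw [← tPow_add (by omega)]; ring_nf
    simp [e₁, e₂, tPow_one, tPow_neg_one]

theorem exists_blockWord_append_tPow (n0 : ℤ) (A : List (FreeGroup X × ℤ)) (n : ℤ)
    (h : ∀ Q q, blockWord n0 A = Q ++ tPow q →
      (tPow q ++ tPow n : List (HLetter X)) = tPow (q + n)) :
    ∃ n0' A', A'.map Prod.fst = A.map Prod.fst ∧ blockWord n0 A ++ tPow n = blockWord n0' A' := by
  rcases A.eq_nil_or_concat' with rfl | ⟨A, ⟨u, q⟩, rfl⟩
  · exact ⟨n0 + n, [], rfl, by simpa [blockWord] using h [] n0 (by simp [blockWord])⟩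
  · have hsplit : blockWord n0 (A ++ [(u, q)]) = (blockWord n0 A ++ [HLetter.gen u]) ++ tPow q := by
      simp [blockWord]
    refine ⟨n0, A ++ [(u, q + n)], by simp, ?_⟩
    rw [hsplit, append_assoc, h _ _ hsplit]
    simp [blockWord]

theorem exists_cancelAt (n0 : ℤ) (pre post : List (FreeGroup X × ℤ)) (u : FreeGroup X) (n : ℤ) :
    ∃ v, CancelAt (pre.length + 1) (blockWord n0 (pre ++ [(u, 0), (u⁻¹, n)] ++ post)) v := by
  rcases pre.eq_nil_or_concat' with rfl | ⟨pre', ⟨u', nl⟩, rfl⟩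
  · exact ⟨_, n0, [], post, u, n, rfl, rfl, .inl ⟨rfl, rfl⟩⟩
  · exact ⟨_, n0, _, post, u, n, rfl, rfl, .inr ⟨pre', u', nl, rfl, rfl⟩⟩

theorem Sim.exists_eqvGen_of_blockWord {n0 n0' n ng nh : ℤ} {pre post A D : List (FreeGroup X × ℤ)}
    {u g h : FreeGroup X}
    (hsim : Sim φ (blockWord n0 (pre ++ [(u, 0), (u⁻¹, n)] ++ post))
      (blockWord n0' (A ++ (g, ng) :: (h, nh) :: D)))
    (hlen : A.length = pre.length) :
    ∃ c, EqvGen (PhiStep φ) (g, c) (h⁻¹, c + ng) := by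
  obtain ⟨H, c, T, hH, hw⟩ := exists_letterHeights_blockWord n0 pre (u, 0) (u⁻¹, n) post
  obtain ⟨H', c', T', hH', hw'⟩ := exists_letterHeights_blockWord n0' A (g, ng) (h, nh) D
  have := forall₂_drop pre.length hsim.forall₂_letterHeights
  simp only [append_assoc, cons_append, nil_append] at this
  rw [hw, hw', drop_left' hH, drop_left' (hH'.trans hlen)] at this
  obtain _ | ⟨hug, _ | ⟨huh, -⟩⟩ := this
  exact ⟨c', hug.symm.trans _ _ _ (by simpa using eqvGen_phiStep_inv huh)⟩

theorem HNNReducedWord.exists_sim_blockWord {n0 c n : ℤ} {A D : List (FreeGroup X × ℤ)}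
    {g h : FreeGroup X} (hred : HNNReducedWord UA UB (blockWord n0 (A ++ (g, n) :: D)))
    (hgh : EqvGen (PhiStep φ) (g, c) (h, c + n)) :
    ∃ n0' A', A'.map Prod.fst = A.map Prod.fst ∧
      Sim φ (blockWord n0 (A ++ (g, n) :: D)) (blockWord n0' (A' ++ (h, 0) :: D)) := by
  have hw : blockWord n0 (A ++ (g, n) :: D) =
      blockWord n0 A ++ HLetter.gen g :: (tPow n ++ blockWord 0 D) := by
    rw [blockWord_append, blockWord_cons, blockWord_eq_tPow_append n D, tPow_zero, nil_append]
  obtain ⟨n0', A', hA', heq⟩ := exists_blockWord_append_tPow n0 A n fun Q q hQ =>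
    HNNReducedWord.tPow_append_tPow (hQ ▸ hw ▸ hred) (mem_closure_of_eqvGen_of_pos hgh)
      (mem_closure_of_eqvGen_of_neg hgh)
  have hw'' : blockWord n0' (A' ++ (h, 0) :: D) =
      blockWord n0 A ++ tPow n ++ HLetter.gen h :: blockWord 0 D := by
    rw [heq, blockWord_append, blockWord_cons, tPow_zero, nil_append]
  refine ⟨n0', A', hA', ?_⟩
  rw [hw, hw'']
  exact sim_gen_tPow hgh _ _

theorem exists_sim_cancelAt_cancelAt_of_lt {S : Set (FreeGroup X)} (hS : ∀ x ∈ S, x⁻¹ ∈ S)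
    {w w' v v' : List (HLetter X)} {m m' : ℕ} (hw' : WordOver S w')
    (hred' : HNNReducedWord UA UB w') (hsim : Sim φ w w') (hc : CancelAt m w v)
    (hc' : CancelAt m' w' v') (hlt : m < m') :
    ∃ w'', WordOver S w'' ∧ Sim φ w' w'' ∧ (∃ z, CancelAt m w'' z) ∧ ∃ z, CancelAt m' w'' z := by
  obtain ⟨n0, pre, post, u, n, rfl, rfl, -⟩ := hc
  obtain ⟨n0', pre', post', x, n', rfl, rfl, -⟩ := hc'
  obtain ⟨A, ⟨g, ng⟩, C, rfl, hA⟩ : ∃ A r C, pre' = A ++ r :: C ∧ A.length = pre.length :=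
    ⟨pre'.take pre.length, _, _, by
      rw [← drop_eq_getElem_cons (i := pre.length) (l := pre') (by omega), take_append_drop],
      by simp; omega⟩
  obtain ⟨h, nh, D, hD⟩ : ∃ h nh D, C ++ [(x, 0), (x⁻¹, n')] ++ post' = (h, nh) :: D := by
    rcases C with _ | ⟨⟨h, nh⟩, C⟩ <;> simp
  have hL' : A ++ (g, ng) :: C ++ [(x, 0), (x⁻¹, n')] ++ post' = A ++ (g, ng) :: (h, nh) :: D := by
    simp [← hD]
  rw [hL'] at hw' hred' hsim ⊢
  obtain ⟨c, hgh⟩ := hsim.exists_eqvGen_of_blockWord hA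
  obtain ⟨n0'', A', hA', hsim'⟩ := hred'.exists_sim_blockWord hgh
  have hlen : A'.length = pre.length := by rw [← length_map (f := Prod.fst), hA', length_map, hA]
  refine ⟨_, ?_, hsim', ?_, ?_⟩
  · rw [wordOver_blockWord] at hw' ⊢
    simp only [map_append, map_cons, mem_append, mem_cons, hA'] at hw' ⊢
    rintro y (hy | rfl | rfl | hy)
    · exact hw' y (.inl hy)
    · exact hS _ (hw' _ (.inr (.inr (.inl rfl))))
    · exact hw' _ (.inr (.inr (.inl rfl)))
    · exact hw' y (.inr (.inr (.inr hy)))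
  · simpa [hlen] using exists_cancelAt n0'' A' D h⁻¹ nh
  · rw [← hD]
    simpa [hlen, hA] using exists_cancelAt n0'' (A' ++ (h⁻¹, 0) :: C) post' x n'

end HnnPaper

open HnnPaper

theorem statement_6_general
    (X : Type*)
    (UH UA UB : Set (FreeGroup X))
    (φ : ↥(Subgroup.closure UA) ≃* ↥(Subgroup.closure UB))
    (w w' v v' : List (HLetter X)) (m m' : ℕ)
    (hw : WordOver (UH ∪ UH⁻¹) w) (hw' : WordOver (UH ∪ UH⁻¹) w')
    (hwred : HNNReducedWord UA UB w) (hw'red : HNNReducedWord UA UB w')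
    (hc : CancelAt m w v) (hsim : Sim φ w w') (hc' : CancelAt m' w' v') :
    ∃ w'' : List (HLetter X), WordOver (UH ∪ UH⁻¹) w'' ∧ Sim φ w w'' ∧
      (∃ z, CancelAt m w'' z) ∧ (∃ z, CancelAt m' w'' z) := by
  have hinv : ∀ x ∈ UH ∪ UH⁻¹, x⁻¹ ∈ UH ∪ UH⁻¹ := fun x hx => by simpa [or_comm] using hx
  rcases lt_trichotomy m m' with hlt | rfl | hgt
  · obtain ⟨w'', hw'', hsim', hcm, hcm'⟩ :=
      exists_sim_cancelAt_cancelAt_of_lt hinv hw' hw'red hsim hc hc' hlt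
    exact ⟨w'', hw'', hsim.trans hsim', hcm, hcm'⟩
  · exact ⟨w, hw, .refl, ⟨v, hc⟩, ⟨v, hc⟩⟩
  · obtain ⟨w'', hw'', hsim', hcm', hcm⟩ :=
      exists_sim_cancelAt_cancelAt_of_lt hinv hw hwred hsim.symm hc' hc hgt
    exact ⟨w'', hw'', hsim', hcm, hcm'⟩

theorem statement_6
    (X : Type*) [Finite X]
    (UH UA UB : Set (FreeGroup X))
    (hUH : IsFreeBasis UH) (hUAH : UA ⊆ UH) (hUBH : UB ⊆ UH)
    (φ : ↥(Subgroup.closure UA) ≃* ↥(Subgroup.closure UB))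
    (hφ : ∀ a : ↥(Subgroup.closure UA), (a : FreeGroup X) ∈ UA ∪ UA⁻¹ ↔
      ((φ a : ↥(Subgroup.closure UB)) : FreeGroup X) ∈ UB ∪ UB⁻¹)
    (w w' v v' : List (HLetter X)) (m m' : ℕ)
    (hw : WordOver (UH ∪ UH⁻¹) w) (hw' : WordOver (UH ∪ UH⁻¹) w')
    (hv : WordOver (UH ∪ UH⁻¹) v) (hv' : WordOver (UH ∪ UH⁻¹) v')
    (hwred : HNNReducedWord UA UB w) (hw'red : HNNReducedWord UA UB w')
    (hvred : HNNReducedWord UA UB v) (hv'red : HNNReducedWord UA UB v')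
    (hc : CancelAt m w v) (hsim : Sim φ w w') (hc' : CancelAt m' w' v') :
    ∃ w'' : List (HLetter X), WordOver (UH ∪ UH⁻¹) w'' ∧ Sim φ w w'' ∧
      (∃ z, CancelAt m w'' z) ∧ (∃ z, CancelAt m' w'' z) :=
  statement_6_general X UH UA UB φ w w' v v' m m' hw hw' hwred hw'red hc hsim hc'
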